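/- arXiv:2006.12766 — 8 statements merged into one kernel-verified Lean document; each statement's English description precedes it below -/
import Mathlib

section
/- Characterization of realizable closed loop maps (Theorem III.1): Let f : ℝⁿ × ℝᵐ → ℝⁿ and let Ψx, Ψu be causal operators mapping ℝⁿ-valued sequences to ℝⁿ-valued and ℝᵐ-valued sequences respectively. Then there exists a causal controller K such that for every w : ℕ → ℝⁿ the unique closed-loop trajectory (x, u) of the plant x_t = f(x_{t−1},u_{t−1}) + w_t, x_0 = w_0, u_t = K_t(x_t,…,x_0) equals (Ψx(w), Ψu(w)), if and only if for every w : ℕ → ℝⁿ one has Ψx(w)_0 = w_0 and Ψx(w)_t = f(Ψx(w)_{t−1}, Ψu(w)_{t−1}) + w_t for all t ≥ 1. -/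
/-!
The state history of the closed loop determines the disturbance causally: `w₀ = x₀` and
`w_{t+1} = x_{t+1} - f(x_t, u_t)`, where `u_t = Ψu(w)_t` depends only on `w₀, …, w_t`.
So a controller can rebuild `w₀, …, w_t` from `x₀, …, x_t` and output `Ψu(w)_t`; the
closed-loop-map equation then says that `Ψx(w)` is the resulting state trajectory.
-/

namespace ClosedLoop

variable {E U : Type*} [AddCommGroup E] (f : E → U → E)
  (Ψu : (t : ℕ) → (Fin (t + 1) → E) → U)

def recoverDisturbance (x : ℕ → E) : ℕ → E
  | 0 => x 0
  | t + 1 => x (t + 1) - f (x t) (Ψu t fun j : Fin (t + 1) => recoverDisturbance x j)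
  decreasing_by exact j.isLt

theorem recoverDisturbance_congr {x y : ℕ → E} {t : ℕ} (h : ∀ s ≤ t, x s = y s) :
    recoverDisturbance f Ψu x t = recoverDisturbance f Ψu y t := by
  induction t using Nat.strong_induction_on with
  | _ t ih =>
    cases t with
    | zero => simpa [recoverDisturbance] using h 0 le_rfl
    | succ t =>
      have hprefix : (fun j : Fin (t + 1) => recoverDisturbance f Ψu x j) =
          fun j : Fin (t + 1) => recoverDisturbance f Ψu y j :=
        funext fun j => ih j (by omega) fun s hs => h s (by omega)
      rw [recoverDisturbance, recoverDisturbance, hprefix, h (t + 1) le_rfl, h t (by omega)]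

theorem recoverDisturbance_eq {w x : ℕ → E} (h0 : x 0 = w 0)
    (hstep : ∀ t, x (t + 1) = f (x t) (Ψu t fun j : Fin (t + 1) => w j) + w (t + 1))
    (t : ℕ) : recoverDisturbance f Ψu x t = w t := by
  induction t using Nat.strong_induction_on with
  | _ t ih =>
    cases t with
    | zero => simpa [recoverDisturbance] using h0
    | succ t =>
      have hprefix : (fun j : Fin (t + 1) => recoverDisturbance f Ψu x j) =
          fun j : Fin (t + 1) => w j :=
        funext fun j => ih j (by omega)
      rw [recoverDisturbance, hprefix, hstep t, add_sub_cancel_left]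

/-- The history `h` is padded by `0` to a sequence; by causality of `recoverDisturbance`
the padding does not affect the output. -/
def recoveringController (t : ℕ) (h : Fin (t + 1) → E) : U :=
  Ψu t fun j : Fin (t + 1) =>
    recoverDisturbance f Ψu (fun s => if hs : s < t + 1 then h ⟨s, hs⟩ else 0) j

theorem recoveringController_eq {w x : ℕ → E} (h0 : x 0 = w 0)
    (hstep : ∀ t, x (t + 1) = f (x t) (Ψu t fun j : Fin (t + 1) => w j) + w (t + 1))
    (t : ℕ) :
    recoveringController f Ψu t (fun j : Fin (t + 1) => x j) = Ψu t fun j => w j := by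
  unfold recoveringController
  congr 1
  funext j
  rw [← recoverDisturbance_eq f Ψu h0 hstep j]
  exact recoverDisturbance_congr f Ψu fun s hs => dif_pos (by omega)

end ClosedLoop

open ClosedLoop in
/-- Characterization of realizable closed loop maps (Theorem III.1).
There exists a causal controller `K` such that for every disturbance `w` the
(unique) closed-loop trajectory `(x, u)` of the plant
`x_t = f(x_{t-1}, u_{t-1}) + w_t`, `x_0 = w_0`, `u_t = K_t(x_t, …, x_0)`
equals `(Ψx(w), Ψu(w))`, if and only if the closed-loop-map equation
`Ψx(w)_0 = w_0` and `Ψx(w)_t = f(Ψx(w)_{t-1}, Ψu(w)_{t-1}) + w_t` (t ≥ 1)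
holds for all `w`. -/
theorem clm_characterization (n m : ℕ)
    (f : (Fin n → ℝ) → (Fin m → ℝ) → (Fin n → ℝ))
    (Ψx : (t : ℕ) → (Fin (t + 1) → (Fin n → ℝ)) → (Fin n → ℝ))
    (Ψu : (t : ℕ) → (Fin (t + 1) → (Fin n → ℝ)) → (Fin m → ℝ)) :
    (∃ K : (t : ℕ) → (Fin (t + 1) → (Fin n → ℝ)) → (Fin m → ℝ),
      ∀ w : ℕ → Fin n → ℝ,
        ∃ (x : ℕ → Fin n → ℝ) (u : ℕ → Fin m → ℝ),
          (x 0 = w 0 ∧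
           (∀ t : ℕ, 1 ≤ t → x t = f (x (t - 1)) (u (t - 1)) + w t) ∧
           (∀ t : ℕ, u t = K t (fun j : Fin (t + 1) => x j))) ∧
          (∀ t : ℕ, x t = Ψx t (fun j : Fin (t + 1) => w j)) ∧
          (∀ t : ℕ, u t = Ψu t (fun j : Fin (t + 1) => w j))) ↔
    (∀ w : ℕ → Fin n → ℝ,
      Ψx 0 (fun j : Fin 1 => w j) = w 0 ∧
      ∀ t : ℕ, 1 ≤ t →
        Ψx t (fun j : Fin (t + 1) => w j) =
          f (Ψx (t - 1) (fun j : Fin (t - 1 + 1) => w j))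
            (Ψu (t - 1) (fun j : Fin (t - 1 + 1) => w j)) + w t) := by
  constructor
  · rintro ⟨K, hK⟩ w
    obtain ⟨x, u, ⟨hx0, hdyn, -⟩, hxΨ, huΨ⟩ := hK w
    refine ⟨by rw [← hxΨ 0, hx0], fun t ht => ?_⟩
    rw [← hxΨ t, ← hxΨ (t - 1), ← huΨ (t - 1)]
    exact hdyn t ht
  · intro H
    refine ⟨recoveringController f Ψu, fun w =>
      ⟨fun t => Ψx t fun j => w j, fun t => Ψu t fun j => w j,
        ⟨(H w).1, (H w).2, fun t => ?_⟩, fun _ => rfl, fun _ => rfl⟩⟩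
    have hstep (t : ℕ) : Ψx (t + 1) (fun j => w j) =
        f (Ψx t fun j => w j) (Ψu t fun j => w j) + w (t + 1) := (H w).2 (t + 1) (by omega)
    exact (recoveringController_eq f Ψu (x := fun t => Ψx t fun j => w j)
      (H w).1 hstep t).symm
end

section
/- System-level implementation realizes its closed loop maps: Let f : ℝⁿ × ℝᵐ → ℝⁿ and let (Ψx, Ψu) be causal operators satisfying the CLM equation for f. Consider the closed loop consisting of the plant x_t = f(x_{t−1}, u_{t−1}) + w_t (t ≥ 1), x_0 = w_0, together with the system-level controller: internal state ŵ_0 = x_0, control u_t = Ψu_t(ŵ_t, …, ŵ_0), and ŵ_{t+1} = x_{t+1} − Ψx_{t+1}(0, ŵ_t, …, ŵ_0). Then for every disturbance sequence w : ℕ → ℝⁿ the resulting trajectories satisfy ŵ_t = w_t, x_t = Ψx(w)_t, and u_t = Ψu(w)_t for all t. -/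
/-!
The controller's internal state `wHat` reconstructs the disturbance exactly. Applying the CLM
equation to the disturbance with its last entry set to zero shows that
`Ψx_{t+1}(0, w_t, …, w_0) = f(Ψx(w)_t, Ψu(w)_t)`: it is the noise-free prediction of `x_{t+1}`.
So, by induction, once `wHat` agrees with `w` up to time `t` the loop has `x_t = Ψx(w)_t` and
`u_t = Ψu(w)_t`, and `x_{t+1}` minus that prediction is exactly `w_{t+1}`.
-/

section ClosedLoop

variable {X U Y : Type*}

lemma history_congr (Ψ : (t : ℕ) → (Fin (t + 1) → X) → Y) {a b : ℕ → X} {t : ℕ}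
    (h : ∀ j ≤ t, a j = b j) : Ψ t (fun j : Fin (t + 1) => a j) = Ψ t (fun j => b j) :=
  congrArg (Ψ t) (funext fun j => h j (Nat.lt_succ_iff.mp j.2))

variable [AddCommGroup X]

def CLMEquation (f : X → U → X) (Ψx : (t : ℕ) → (Fin (t + 1) → X) → X)
    (Ψu : (t : ℕ) → (Fin (t + 1) → X) → U) : Prop :=
  ∀ w : ℕ → X, Ψx 0 (fun j => w j) = w 0 ∧
    ∀ t : ℕ, Ψx (t + 1) (fun j => w j) =
      f (Ψx t (fun j => w j)) (Ψu t (fun j => w j)) + w (t + 1)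

variable {f : X → U → X} {Ψx : (t : ℕ) → (Fin (t + 1) → X) → X}
  {Ψu : (t : ℕ) → (Fin (t + 1) → X) → U}

lemma CLMEquation.apply_update_succ_zero (hΨ : CLMEquation f Ψx Ψu) (w : ℕ → X) (t : ℕ) :
    Ψx (t + 1) (fun j => Function.update w (t + 1) 0 j) =
      f (Ψx t (fun j => w j)) (Ψu t (fun j => w j)) := by
  have hagree : ∀ j ≤ t, Function.update w (t + 1) 0 j = w j := fun j hj =>
    Function.update_of_ne (by omega) _ _
  rw [(hΨ _).2 t, history_congr Ψx hagree, history_congr Ψu hagree,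
    Function.update_self, add_zero]

lemma CLMEquation.closedLoop_eq (hΨ : CLMEquation f Ψx Ψu) {w x wHat : ℕ → X} {u : ℕ → U}
    (hx0 : x 0 = w 0) (hx : ∀ t, x (t + 1) = f (x t) (u t) + w (t + 1))
    (hu : ∀ t, u t = Ψu t (fun j => wHat j)) (hwHat0 : wHat 0 = x 0)
    (hwHat : ∀ t, wHat (t + 1) = x (t + 1) - Ψx (t + 1) (fun j => Function.update wHat (t + 1) 0 j))
    (t : ℕ) : (∀ j ≤ t, wHat j = w j) ∧ x t = Ψx t (fun j => w j) := by
  induction t with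
  | zero =>
    refine ⟨fun j hj => ?_, hx0.trans (hΨ w).1.symm⟩
    rw [Nat.le_zero.mp hj, hwHat0, hx0]
  | succ t ih =>
    obtain ⟨hagree, hxt⟩ := ih
    have hut : u t = Ψu t (fun j => w j) := (hu t).trans (history_congr Ψu hagree)
    have hxt' : x (t + 1) = f (Ψx t (fun j => w j)) (Ψu t (fun j => w j)) + w (t + 1) := by
      rw [hx, hxt, hut]
    have hagree_update : ∀ j ≤ t + 1,
        Function.update wHat (t + 1) 0 j = Function.update w (t + 1) 0 j := by
      intro j hj
      rcases eq_or_lt_of_le hj with rfl | hlt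
      · simp only [Function.update_self]
      · simp only [Function.update_of_ne hlt.ne, hagree j (by omega)]
    have hwHat_succ : wHat (t + 1) = w (t + 1) := by
      rw [hwHat, history_congr Ψx hagree_update, hΨ.apply_update_succ_zero, hxt',
        add_sub_cancel_left]
    refine ⟨fun j hj => ?_, hxt'.trans ((hΨ w).2 t).symm⟩
    rcases eq_or_lt_of_le hj with rfl | hlt
    · exact hwHat_succ
    · exact hagree j (by omega)

end ClosedLoop

/-- The system-level implementation realizes its closed loop maps.
If `(Ψx, Ψu)` satisfy the CLM equation for `f`, then the closed loop of the
plant `x_t = f(x_{t-1}, u_{t-1}) + w_t`, `x_0 = w_0`, with the system-level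
controller `wHat_0 = x_0`, `u_t = Ψu_t(wHat_t, …, wHat_0)`,
`wHat_{t+1} = x_{t+1} − Ψx_{t+1}(0, wHat_t, …, wHat_0)` satisfies
`wHat_t = w_t`, `x_t = Ψx(w)_t`, `u_t = Ψu(w)_t` for all `t`. -/
theorem sl_implementation_realizes (n m : ℕ)
    (f : (Fin n → ℝ) → (Fin m → ℝ) → (Fin n → ℝ))
    (Ψx : (t : ℕ) → (Fin (t + 1) → (Fin n → ℝ)) → (Fin n → ℝ))
    (Ψu : (t : ℕ) → (Fin (t + 1) → (Fin n → ℝ)) → (Fin m → ℝ))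
    (hCLM : ∀ w : ℕ → Fin n → ℝ,
      Ψx 0 (fun j : Fin 1 => w j) = w 0 ∧
      ∀ t : ℕ, 1 ≤ t →
        Ψx t (fun j : Fin (t + 1) => w j) =
          f (Ψx (t - 1) (fun j : Fin (t - 1 + 1) => w j))
            (Ψu (t - 1) (fun j : Fin (t - 1 + 1) => w j)) + w t)
    (w x : ℕ → Fin n → ℝ) (u : ℕ → Fin m → ℝ) (wHat : ℕ → Fin n → ℝ)
    (hx0 : x 0 = w 0)
    (hx : ∀ t : ℕ, 1 ≤ t → x t = f (x (t - 1)) (u (t - 1)) + w t)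
    (hu : ∀ t : ℕ, u t = Ψu t (fun j : Fin (t + 1) => wHat j))
    (hwHat0 : wHat 0 = x 0)
    (hwHat : ∀ t : ℕ, wHat (t + 1) = x (t + 1) -
      Ψx (t + 1) (fun j : Fin (t + 2) => if (j : ℕ) = t + 1 then 0 else wHat j)) :
    ∀ t : ℕ, wHat t = w t ∧
      x t = Ψx t (fun j : Fin (t + 1) => w j) ∧
      u t = Ψu t (fun j : Fin (t + 1) => w j) := by
  have hΨ : CLMEquation f Ψx Ψu := fun w => ⟨(hCLM w).1, fun t => (hCLM w).2 (t + 1) t.succ_pos⟩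
  intro t
  obtain ⟨hagree, hxt⟩ := hΨ.closedLoop_eq hx0 (fun t => hx (t + 1) t.succ_pos) hu hwHat0
    (fun t => by simpa only [Function.update_apply] using hwHat t) t
  exact ⟨hagree t le_rfl, hxt, (hu t).trans (history_congr Ψu hagree)⟩
end

section
/- Uniqueness of the realizing controller: Let f : ℝⁿ × ℝᵐ → ℝⁿ and let (Ψx, Ψu) be causal operators satisfying the CLM equation for f. If K and K′ are two causal controllers each realizing (Ψx, Ψu) — i.e., for every w : ℕ → ℝⁿ the unique closed-loop trajectory of the plant x_t = f(x_{t−1},u_{t−1}) + w_t, x_0 = w_0, under the controller equals (Ψx(w), Ψu(w)) — then K_t = K′_t as functions on (ℝⁿ)^{t+1} for every t; in fact K is uniquely determined by K = Ψu ∘ (Ψx)⁻¹, where Ψx⁻¹ is the (causal) inverse of Ψx on sequences. -/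
/-!
Realization alone gives `K_t(x_t, …, x₀) = Ψu_t(w_t, …, w₀)` whenever `Ψx(w) = x`, i.e.
`K = Ψu ∘ S` for every right inverse `S` of `Ψx`. A right inverse always exists: `x` is the
closed-loop trajectory under `K` for the disturbance read off from the plant equation,
`w₀ = x₀` and `w_t = -f(x_{t-1}, K_{t-1}(x_{t-1}, …, x₀)) + x_t`, and since closed-loop trajectories
are unique, `Ψx(w) = x`. Using this disturbance map of `K` as `S` for `K'` as well gives `K' = K`.
-/

namespace Control

variable {X U : Type*}

def history (x : ℕ → X) (t : ℕ) : Fin (t + 1) → X := fun j => x j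

theorem history_ofNat (t : ℕ) (h : Fin (t + 1) → X) :
    history (fun j : ℕ => h (Fin.ofNat (t + 1) j)) t = h :=
  funext fun j => congrArg h (Fin.ofNat_val_eq_self j)

section ClosedLoop

variable [Add X] (f : X → U → X) (K : (t : ℕ) → (Fin (t + 1) → X) → U)

def IsClosedLoop (w x : ℕ → X) (u : ℕ → U) : Prop :=
  x 0 = w 0 ∧
    (∀ t : ℕ, 1 ≤ t → x t = f (x (t - 1)) (u (t - 1)) + w t) ∧
    ∀ t : ℕ, u t = K t (history x t)

def Realizes (Ψx : (t : ℕ) → (Fin (t + 1) → X) → X) (Ψu : (t : ℕ) → (Fin (t + 1) → X) → U) :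
    Prop :=
  ∀ w : ℕ → X, ∃ (x : ℕ → X) (u : ℕ → U), IsClosedLoop f K w x u ∧
    (∀ t, x t = Ψx t (history w t)) ∧ ∀ t, u t = Ψu t (history w t)

variable {f K}

theorem IsClosedLoop.trajectory_unique {w x x' : ℕ → X} {u u' : ℕ → U}
    (h : IsClosedLoop f K w x u) (h' : IsClosedLoop f K w x' u') : x = x' := by
  obtain ⟨h0, hstep, hu⟩ := h
  obtain ⟨h0', hstep', hu'⟩ := h'
  funext t
  induction t using Nat.strong_induction_on with
  | _ t ih =>
    cases t with
    | zero => rw [h0, h0']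
    | succ s =>
      have hhist : history x s = history x' s := funext fun j => ih j (by omega)
      rw [hstep (s + 1) (by omega), hstep' (s + 1) (by omega), Nat.add_sub_cancel, hu s, hu' s,
        hhist, ih s (by omega)]

theorem Realizes.controller_eq_of_rightInverse
    {Ψx : (t : ℕ) → (Fin (t + 1) → X) → X} {Ψu : (t : ℕ) → (Fin (t + 1) → X) → U}
    (hK : Realizes f K Ψx Ψu) {x w : ℕ → X} (hxw : ∀ t, Ψx t (history w t) = x t) (t : ℕ) :
    K t (history x t) = Ψu t (history w t) := by
  obtain ⟨x', u', ⟨-, -, hu'⟩, hx', hΨu⟩ := hK w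
  have hx : x' = x := funext fun s => (hx' s).trans (hxw s)
  rw [← hΨu t, hu' t, hx]

end ClosedLoop

section Disturbance

variable [AddGroup X] (f : X → U → X) (K : (t : ℕ) → (Fin (t + 1) → X) → U)

def disturbance (x : ℕ → X) (t : ℕ) : X :=
  if t = 0 then x 0 else -f (x (t - 1)) (K (t - 1) (history x (t - 1))) + x t

theorem isClosedLoop_disturbance (x : ℕ → X) :
    IsClosedLoop f K (disturbance f K x) x (fun t => K t (history x t)) := by
  refine ⟨by simp [disturbance], fun t ht => ?_, fun t => rfl⟩
  simp [disturbance, Nat.one_le_iff_ne_zero.mp ht]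

variable {f K}

theorem Realizes.trajectory_disturbance
    {Ψx : (t : ℕ) → (Fin (t + 1) → X) → X} {Ψu : (t : ℕ) → (Fin (t + 1) → X) → U}
    (hK : Realizes f K Ψx Ψu) (x : ℕ → X) (t : ℕ) :
    Ψx t (history (disturbance f K x) t) = x t := by
  obtain ⟨x', u', hcl, hx', -⟩ := hK (disturbance f K x)
  rw [← hx' t, hcl.trajectory_unique (isClosedLoop_disturbance f K x)]

end Disturbance

end Control

open Control in
theorem realizing_controller_unique_general (n m : ℕ)
    (f : (Fin n → ℝ) → (Fin m → ℝ) → (Fin n → ℝ))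
    (Ψx : (t : ℕ) → (Fin (t + 1) → (Fin n → ℝ)) → (Fin n → ℝ))
    (Ψu : (t : ℕ) → (Fin (t + 1) → (Fin n → ℝ)) → (Fin m → ℝ))
    (K K' : (t : ℕ) → (Fin (t + 1) → (Fin n → ℝ)) → (Fin m → ℝ))
    (hK : ∀ w : ℕ → Fin n → ℝ,
      ∃ (x : ℕ → Fin n → ℝ) (u : ℕ → Fin m → ℝ),
        (x 0 = w 0 ∧
         (∀ t : ℕ, 1 ≤ t → x t = f (x (t - 1)) (u (t - 1)) + w t) ∧
         (∀ t : ℕ, u t = K t (fun j : Fin (t + 1) => x j))) ∧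
        (∀ t : ℕ, x t = Ψx t (fun j : Fin (t + 1) => w j)) ∧
        (∀ t : ℕ, u t = Ψu t (fun j : Fin (t + 1) => w j)))
    (hK' : ∀ w : ℕ → Fin n → ℝ,
      ∃ (x : ℕ → Fin n → ℝ) (u : ℕ → Fin m → ℝ),
        (x 0 = w 0 ∧
         (∀ t : ℕ, 1 ≤ t → x t = f (x (t - 1)) (u (t - 1)) + w t) ∧
         (∀ t : ℕ, u t = K' t (fun j : Fin (t + 1) => x j))) ∧
        (∀ t : ℕ, x t = Ψx t (fun j : Fin (t + 1) => w j)) ∧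
        (∀ t : ℕ, u t = Ψu t (fun j : Fin (t + 1) => w j))) :
    (∀ (t : ℕ) (h : Fin (t + 1) → (Fin n → ℝ)), K t h = K' t h) ∧
    (∀ S : (ℕ → Fin n → ℝ) → (ℕ → Fin n → ℝ),
      Function.LeftInverse S
        (fun (w : ℕ → Fin n → ℝ) (t : ℕ) => Ψx t (fun j : Fin (t + 1) => w j)) →
      Function.RightInverse S
        (fun (w : ℕ → Fin n → ℝ) (t : ℕ) => Ψx t (fun j : Fin (t + 1) => w j)) →
      ∀ (x : ℕ → Fin n → ℝ) (t : ℕ),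
        K t (fun j : Fin (t + 1) => x j) =
          Ψu t (fun j : Fin (t + 1) => S x j)) := by
  have hReal : Realizes f K Ψx Ψu := hK
  have hReal' : Realizes f K' Ψx Ψu := hK'
  refine ⟨fun t h => ?_, fun S _ hR x t => ?_⟩
  · have hD := hReal.trajectory_disturbance fun j => h (Fin.ofNat (t + 1) j)
    rw [← history_ofNat t h, hReal.controller_eq_of_rightInverse hD,
      hReal'.controller_eq_of_rightInverse hD]
  · exact hReal.controller_eq_of_rightInverse (congrFun (hR x)) t

/-- Uniqueness of the realizing controller.
If `(Ψx, Ψu)` satisfy the CLM equation for `f` and two causal controllers `K`,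
`K'` both realize `(Ψx, Ψu)` (for every `w` the closed-loop trajectory equals
`(Ψx(w), Ψu(w))`), then `K_t = K'_t` as functions on histories for every `t`;
moreover `K = Ψu ∘ (Ψx)⁻¹`: for any two-sided inverse `S` of the operator
`w ↦ Ψx(w)` on sequences, `K_t(x_t,…,x_0) = Ψu_t((S x)_t, …, (S x)_0)`. -/
theorem realizing_controller_unique (n m : ℕ)
    (f : (Fin n → ℝ) → (Fin m → ℝ) → (Fin n → ℝ))
    (Ψx : (t : ℕ) → (Fin (t + 1) → (Fin n → ℝ)) → (Fin n → ℝ))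
    (Ψu : (t : ℕ) → (Fin (t + 1) → (Fin n → ℝ)) → (Fin m → ℝ))
    (hCLM : ∀ w : ℕ → Fin n → ℝ,
      Ψx 0 (fun j : Fin 1 => w j) = w 0 ∧
      ∀ t : ℕ, 1 ≤ t →
        Ψx t (fun j : Fin (t + 1) => w j) =
          f (Ψx (t - 1) (fun j : Fin (t - 1 + 1) => w j))
            (Ψu (t - 1) (fun j : Fin (t - 1 + 1) => w j)) + w t)
    (K K' : (t : ℕ) → (Fin (t + 1) → (Fin n → ℝ)) → (Fin m → ℝ))
    (hK : ∀ w : ℕ → Fin n → ℝ,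
      ∃ (x : ℕ → Fin n → ℝ) (u : ℕ → Fin m → ℝ),
        (x 0 = w 0 ∧
         (∀ t : ℕ, 1 ≤ t → x t = f (x (t - 1)) (u (t - 1)) + w t) ∧
         (∀ t : ℕ, u t = K t (fun j : Fin (t + 1) => x j))) ∧
        (∀ t : ℕ, x t = Ψx t (fun j : Fin (t + 1) => w j)) ∧
        (∀ t : ℕ, u t = Ψu t (fun j : Fin (t + 1) => w j)))
    (hK' : ∀ w : ℕ → Fin n → ℝ,
      ∃ (x : ℕ → Fin n → ℝ) (u : ℕ → Fin m → ℝ),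
        (x 0 = w 0 ∧
         (∀ t : ℕ, 1 ≤ t → x t = f (x (t - 1)) (u (t - 1)) + w t) ∧
         (∀ t : ℕ, u t = K' t (fun j : Fin (t + 1) => x j))) ∧
        (∀ t : ℕ, x t = Ψx t (fun j : Fin (t + 1) => w j)) ∧
        (∀ t : ℕ, u t = Ψu t (fun j : Fin (t + 1) => w j))) :
    (∀ (t : ℕ) (h : Fin (t + 1) → (Fin n → ℝ)), K t h = K' t h) ∧
    (∀ S : (ℕ → Fin n → ℝ) → (ℕ → Fin n → ℝ),
      Function.LeftInverse S
        (fun (w : ℕ → Fin n → ℝ) (t : ℕ) => Ψx t (fun j : Fin (t + 1) => w j)) →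
      Function.RightInverse S
        (fun (w : ℕ → Fin n → ℝ) (t : ℕ) => Ψx t (fun j : Fin (t + 1) => w j)) →
      ∀ (x : ℕ → Fin n → ℝ) (t : ℕ),
        K t (fun j : Fin (t + 1) => x j) =
          Ψu t (fun j : Fin (t + 1) => S x j)) :=
  realizing_controller_unique_general n m f Ψx Ψu K K' hK hK'
end

section
/- Linear FIR closed-loop-map characterization: Let A ∈ ℝ^{n×n}, B ∈ ℝ^{n×m}, T ≥ 1, and matrices R_1, …, R_T ∈ ℝ^{n×n}, M_1, …, M_T ∈ ℝ^{m×n}. Define the FIR maps Ψx(w)_t = Σ_{k=1}^{min(t+1,T)} R_k w_{t+1−k} and Ψu(w)_t = Σ_{k=1}^{min(t+1,T)} M_k w_{t+1−k} for w : ℕ → ℝⁿ. Then (Ψx, Ψu) satisfies Ψx(w)_0 = w_0 and Ψx(w)_t = A·Ψx(w)_{t−1} + B·Ψu(w)_{t−1} + w_t for every w and every t ≥ 1, if and only if R_1 = I, R_{k+1} = A R_k + B M_k for all 1 ≤ k ≤ T−1, and A R_T + B M_T = 0. -/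
/-!
Both FIR maps are causal convolutions `Σ_{j ≤ t} G_j w_{t-j}` whose kernels are the impulse
responses `G_j = R_{j+1}`, `H_j = M_{j+1}` for `j < T`, and `0` afterwards. The closed-loop
equations hold for every `w` exactly when the kernels satisfy `G_0 = I`,
`G_{j+1} = A G_j + B H_j`: necessity by feeding an impulse `w = δ_0 v`, sufficiency by peeling
the `j = 0` term off the convolution sum. For the truncated kernels, this recursion is the
recursion on `R, M` for `j + 1 < T`, the terminal condition `A R_T + B M_T = 0` at `j + 1 = T`,
and `0 = 0` beyond.
-/

/-- The FIR map associated with matrices `Mm 1, …, Mm T`: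
`(fir Mm T w)_t = Σ_{k=1}^{min(t+1,T)} Mm_k w_{t+1-k}`. -/
noncomputable def fir {p n : ℕ} (Mm : ℕ → Matrix (Fin p) (Fin n) ℝ) (T : ℕ)
    (w : ℕ → Fin n → ℝ) (t : ℕ) : Fin p → ℝ :=
  ∑ k ∈ Finset.Icc 1 (min (t + 1) T), (Mm k).mulVec (w (t + 1 - k))

open Finset Matrix

section CausalConv

variable {𝕜 ι κ : Type*} [Semiring 𝕜] [Fintype ι]

def causalConv (G : ℕ → Matrix κ ι 𝕜) (w : ℕ → ι → 𝕜) (t : ℕ) : κ → 𝕜 :=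
  ∑ j ∈ range (t + 1), G j *ᵥ w (t - j)

theorem causalConv_zero (G : ℕ → Matrix κ ι 𝕜) (w : ℕ → ι → 𝕜) :
    causalConv G w 0 = G 0 *ᵥ w 0 := by
  simp [causalConv]

theorem causalConv_succ (G : ℕ → Matrix κ ι 𝕜) (w : ℕ → ι → 𝕜) (t : ℕ) :
    causalConv G w (t + 1) =
      ∑ j ∈ range (t + 1), G (j + 1) *ᵥ w (t - j) + G 0 *ᵥ w (t + 1) := by
  rw [causalConv, sum_range_succ']
  simp

theorem causalConv_single_zero [DecidableEq ι] (G : ℕ → Matrix κ ι 𝕜) (v : ι → 𝕜) (t : ℕ) :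
    causalConv G (Pi.single 0 v) t = G t *ᵥ v := by
  rw [causalConv, sum_eq_single_of_mem t (self_mem_range_succ t)]
  · simp
  · intro j hj hjt
    have : t - j ≠ 0 := by grind
    simp [this]

variable [Fintype κ] [DecidableEq ι] {A : Matrix ι ι 𝕜} {B : Matrix ι κ 𝕜}
  {G : ℕ → Matrix ι ι 𝕜} {H : ℕ → Matrix κ ι 𝕜}

theorem causalConv_closedLoop_iff :
    (∀ w : ℕ → ι → 𝕜, causalConv G w 0 = w 0 ∧ ∀ t, 1 ≤ t →
      causalConv G w t = A *ᵥ causalConv G w (t - 1) + B *ᵥ causalConv H w (t - 1) + w t) ↔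
    G 0 = 1 ∧ ∀ j, G (j + 1) = A * G j + B * H j := by
  constructor
  · intro h
    refine ⟨ext_iff_mulVec.2 fun v => ?_, fun j => ext_iff_mulVec.2 fun v => ?_⟩
    · simpa [causalConv_single_zero] using (h (Pi.single 0 v)).1
    · simpa [causalConv_single_zero, add_mulVec, mulVec_mulVec] using
        (h (Pi.single 0 v)).2 (j + 1) (by omega)
  · rintro ⟨hG0, hG⟩ w
    refine ⟨by simp [causalConv_zero, hG0], fun t ht => ?_⟩
    obtain ⟨s, rfl⟩ := Nat.exists_eq_add_of_le' ht
    rw [Nat.add_sub_cancel, causalConv_succ, hG0, one_mulVec, causalConv, causalConv,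
      mulVec_sum, mulVec_sum, ← sum_add_distrib]
    simp only [hG, add_mulVec, mulVec_mulVec]

end CausalConv

section FirCoeff

variable {𝕜 ι κ : Type*}

def firCoeff [Zero 𝕜] (Mm : ℕ → Matrix κ ι 𝕜) (T j : ℕ) : Matrix κ ι 𝕜 :=
  if j < T then Mm (j + 1) else 0

theorem fir_eq_causalConv {p n : ℕ} (Mm : ℕ → Matrix (Fin p) (Fin n) ℝ) (T : ℕ) :
    fir Mm T = causalConv (firCoeff Mm T) := by
  ext w t : 2
  have hrange : (range (t + 1)).filter (· < T) = range (min (t + 1) T) := by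
    ext j; simp only [mem_filter, mem_range]; omega
  have hcoeff (j : ℕ) :
      firCoeff Mm T j *ᵥ w (t - j) = if j < T then Mm (j + 1) *ᵥ w (t - j) else 0 := by
    unfold firCoeff; split_ifs <;> simp
  rw [fir, causalConv]
  simp only [hcoeff, ← sum_filter, hrange]
  rw [← Ico_add_one_right_eq_Icc, sum_Ico_eq_sum_range, Nat.add_sub_cancel]
  simp only [add_comm 1, Nat.add_sub_add_right]

theorem firCoeff_recursion_iff [Semiring 𝕜] [Fintype ι] [Fintype κ] [DecidableEq ι] {T : ℕ}
    (hT : 1 ≤ T) (A : Matrix ι ι 𝕜) (B : Matrix ι κ 𝕜)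
    (R : ℕ → Matrix ι ι 𝕜) (M : ℕ → Matrix κ ι 𝕜) :
    (firCoeff R T 0 = 1 ∧ ∀ j, firCoeff R T (j + 1) = A * firCoeff R T j + B * firCoeff M T j) ↔
    (R 1 = 1 ∧ (∀ k, 1 ≤ k → k + 1 ≤ T → R (k + 1) = A * R k + B * M k) ∧
      A * R T + B * M T = 0) := by
  rw [show firCoeff R T 0 = R 1 from if_pos hT]
  refine and_congr_right fun _ => ⟨fun h => ⟨fun k hk hkT => ?_, ?_⟩, fun ⟨hrec, hlast⟩ j => ?_⟩
  · obtain ⟨j, rfl⟩ := Nat.exists_eq_add_of_le' hk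
    simpa [firCoeff, show j + 1 < T by omega, show j < T by omega] using h j
  · obtain ⟨j, rfl⟩ := Nat.exists_eq_add_of_le' hT
    simpa [firCoeff, eq_comm] using h j
  · rcases lt_trichotomy (j + 1) T with hj | rfl | hj
    · simp [firCoeff, hj, Nat.lt_of_succ_lt hj, hrec (j + 1) (by omega) hj]
    · simp [firCoeff, hlast]
    · simp [firCoeff, show ¬ j + 1 < T by omega, show ¬ j < T by omega]

end FirCoeff

/-- Linear FIR closed-loop-map characterization.
The FIR maps `Ψx(w)_t = Σ R_k w_{t+1-k}`, `Ψu(w)_t = Σ M_k w_{t+1-k}` satisfy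
the closed-loop-map equations `Ψx(w)_0 = w_0`,
`Ψx(w)_t = A Ψx(w)_{t-1} + B Ψu(w)_{t-1} + w_t` (t ≥ 1) for every `w`, if and
only if `R_1 = I`, `R_{k+1} = A R_k + B M_k` for `1 ≤ k ≤ T-1`, and
`A R_T + B M_T = 0`. -/
theorem linear_fir_clm_characterization (n m T : ℕ) (hT : 1 ≤ T)
    (A : Matrix (Fin n) (Fin n) ℝ) (B : Matrix (Fin n) (Fin m) ℝ)
    (R : ℕ → Matrix (Fin n) (Fin n) ℝ) (M : ℕ → Matrix (Fin m) (Fin n) ℝ) :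
    (∀ w : ℕ → Fin n → ℝ,
      fir R T w 0 = w 0 ∧
      ∀ t : ℕ, 1 ≤ t →
        fir R T w t =
          A.mulVec (fir R T w (t - 1)) + B.mulVec (fir M T w (t - 1)) + w t) ↔
    (R 1 = 1 ∧
     (∀ k : ℕ, 1 ≤ k → k + 1 ≤ T → R (k + 1) = A * R k + B * M k) ∧
     A * R T + B * M T = 0) := by
  rw [fir_eq_causalConv, fir_eq_causalConv, causalConv_closedLoop_iff]
  exact firCoeff_recursion_iff hT A B R M
end

section
/- Blended closed loop maps are valid CLMs for bounded disturbances: Let A ∈ ℝ^{n×n}, B ∈ ℝ^{n×m}, T ≥ 1, N ≥ 1, levels 0 = η_0 ≤ η_1 ≤ … ≤ η_N, and for each i ∈ {1,…,N} matrices (R^i_1,…,R^i_T, M^i_1,…,M^i_T) satisfying the SLS feasibility conditions for (A,B) with horizon T. Define the blended maps Ψx(w)_t = Σ_{i=1}^N Σ_{k=1}^{min(t+1,T)} R^i_k (P_{η_i}(w_{t+1−k}) − P_{η_{i−1}}(w_{t+1−k})) and Ψu(w)_t analogously with M^i_k, where P_η is the saturation projection. Then for every disturbance w : ℕ → ℝⁿ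 with sup_t |w_t| ≤ η_N (sup vector norm), the blended maps satisfy Ψx(w)_0 = w_0 and Ψx(w)_t = A·Ψx(w)_{t−1} + B·Ψu(w)_{t−1} + w_t for all t ≥ 1. -/
/-!
Extend the taps of a feasible pair `(R, M)` by zero past the horizon `T`: the recursion
`R_{k+1} = A R_k + B M_k` then holds for every `k ≥ 1`, the terminal condition
`A R_T + B M_T = 0` being its case `k = T`. Together with `R_1 = I` this makes the FIR responses
of `(R, M)` to an arbitrary input `v` satisfy the closed-loop recursion driven by `v`. The blended
map is the sum over `i` of the responses of `(Rⁱ, Mⁱ)` to the saturation increments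
`P_{ηᵢ} w - P_{ηᵢ₋₁} w`, so by linearity it satisfies the recursion driven by their sum, which
telescopes to `P_{η_N} w - P_0 w = w`.
-/

/-- Scalar saturation at level `η`: `sat(a,η) = sign(a)·min(|a|,η)`. -/
noncomputable def satScalar (η a : ℝ) : ℝ := Real.sign a * min |a| η

/-- Coordinatewise saturation projection on `ℝⁿ` (sup norm). -/
noncomputable def satProj {n : ℕ} (η : ℝ) (w : Fin n → ℝ) : Fin n → ℝ :=
  fun i => satScalar η (w i)

/-- SLS feasibility conditions for `(A, B)` with horizon `T`:
`R_1 = I`, `R_{k+1} = A R_k + B M_k` for `1 ≤ k ≤ T-1`, `A R_T + B M_T = 0`. -/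
def SLSFeasible {n m : ℕ} (A : Matrix (Fin n) (Fin n) ℝ) (B : Matrix (Fin n) (Fin m) ℝ)
    (T : ℕ) (R : ℕ → Matrix (Fin n) (Fin n) ℝ) (M : ℕ → Matrix (Fin m) (Fin n) ℝ) : Prop :=
  R 1 = 1 ∧
  (∀ k : ℕ, 1 ≤ k → k + 1 ≤ T → R (k + 1) = A * R k + B * M k) ∧
  A * R T + B * M T = 0

/-- The blended FIR map
`(blend Mm η N T w)_t =
  Σ_{i=1}^N Σ_{k=1}^{min(t+1,T)} Mm^i_k (P_{η_i}(w_{t+1-k}) − P_{η_{i-1}}(w_{t+1-k}))`. -/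
noncomputable def blend {p n : ℕ} (Mm : ℕ → ℕ → Matrix (Fin p) (Fin n) ℝ)
    (η : ℕ → ℝ) (N T : ℕ) (w : ℕ → Fin n → ℝ) (t : ℕ) : Fin p → ℝ :=
  ∑ i ∈ Finset.Icc 1 N, ∑ k ∈ Finset.Icc 1 (min (t + 1) T),
    (Mm i k).mulVec (satProj (η i) (w (t + 1 - k)) - satProj (η (i - 1)) (w (t + 1 - k)))

open Finset Matrix

theorem Real.sign_mul_abs (a : ℝ) : Real.sign a * |a| = a := by
  rcases lt_trichotomy a 0 with ha | rfl | ha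
  · rw [Real.sign_of_neg ha, abs_of_neg ha]; ring
  · simp
  · rw [Real.sign_of_pos ha, abs_of_pos ha, one_mul]

theorem satScalar_of_abs_le {η a : ℝ} (h : |a| ≤ η) : satScalar η a = a := by
  rw [satScalar, min_eq_left h, Real.sign_mul_abs]

theorem satScalar_zero (a : ℝ) : satScalar 0 a = 0 := by
  rw [satScalar, min_eq_right (abs_nonneg a), mul_zero]

theorem satProj_of_norm_le {n : ℕ} {η : ℝ} {x : Fin n → ℝ} (h : ‖x‖ ≤ η) : satProj η x = x :=
  funext fun j => satScalar_of_abs_le ((norm_le_pi_norm x j).trans h)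

theorem satProj_zero {n : ℕ} (x : Fin n → ℝ) : satProj 0 x = 0 :=
  funext fun j => satScalar_zero (x j)

theorem Finset.sum_Icc_one_eq_sum_range {M : Type*} [AddCommMonoid M] (f : ℕ → M) (N : ℕ) :
    ∑ i ∈ Icc 1 N, f i = ∑ i ∈ range N, f (i + 1) := by
  rw [← Ico_add_one_right_eq_Icc, sum_Ico_eq_sum_range, Nat.add_sub_cancel]
  simp only [add_comm 1]

theorem sum_satProj_sub_satProj {n N : ℕ} {η : ℕ → ℝ} (hη0 : η 0 = 0) {x : Fin n → ℝ}
    (hx : ‖x‖ ≤ η N) :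
    ∑ i ∈ Icc 1 N, (satProj (η i) x - satProj (η (i - 1)) x) = x := by
  rw [sum_Icc_one_eq_sum_range]
  simp only [Nat.add_sub_cancel]
  rw [sum_range_sub (fun i => satProj (η i) x), satProj_of_norm_le hx, hη0, satProj_zero,
    sub_zero]

noncomputable def firResponse {p n : ℕ} (Φ : ℕ → Matrix (Fin p) (Fin n) ℝ) (T : ℕ)
    (v : ℕ → Fin n → ℝ) (t : ℕ) : Fin p → ℝ :=
  ∑ k ∈ Icc 1 (min (t + 1) T), (Φ k).mulVec (v (t + 1 - k))

theorem blend_eq_sum_firResponse {p n : ℕ} (Φ : ℕ → ℕ → Matrix (Fin p) (Fin n) ℝ) (η : ℕ → ℝ)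
    (N T : ℕ) (w : ℕ → Fin n → ℝ) (t : ℕ) :
    blend Φ η N T w t =
      ∑ i ∈ Icc 1 N,
        firResponse (Φ i) T (fun s => satProj (η i) (w s) - satProj (η (i - 1)) (w s)) t :=
  rfl

def truncateTaps {p n : ℕ} (T : ℕ) (Φ : ℕ → Matrix (Fin p) (Fin n) ℝ) (k : ℕ) :
    Matrix (Fin p) (Fin n) ℝ :=
  if k ≤ T then Φ k else 0

theorem firResponse_eq_sum_range {p n : ℕ} (Φ : ℕ → Matrix (Fin p) (Fin n) ℝ) (T : ℕ)
    (v : ℕ → Fin n → ℝ) (t : ℕ) :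
    firResponse Φ T v t =
      ∑ k ∈ range (t + 1), (truncateTaps T Φ (k + 1)).mulVec (v (t - k)) := by
  have hIcc : Icc 1 (min (t + 1) T) = (Icc 1 (t + 1)).filter (· ≤ T) := by
    ext k; simp only [mem_filter, mem_Icc]; omega
  rw [firResponse, hIcc, sum_filter, sum_Icc_one_eq_sum_range]
  refine sum_congr rfl fun k _ => ?_
  rw [truncateTaps, Nat.add_sub_add_right]
  split_ifs <;> simp

namespace SLSFeasible

variable {n m T : ℕ} {A : Matrix (Fin n) (Fin n) ℝ} {B : Matrix (Fin n) (Fin m) ℝ}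
  {R : ℕ → Matrix (Fin n) (Fin n) ℝ} {M : ℕ → Matrix (Fin m) (Fin n) ℝ}

theorem truncateTaps_one (h : SLSFeasible A B T R M) (hT : 1 ≤ T) : truncateTaps T R 1 = 1 := by
  rw [truncateTaps, if_pos hT, h.1]

theorem truncateTaps_succ (h : SLSFeasible A B T R M) {k : ℕ} (hk : 1 ≤ k) :
    truncateTaps T R (k + 1) = A * truncateTaps T R k + B * truncateTaps T M k := by
  obtain ⟨-, hrec, hterm⟩ := h
  unfold truncateTaps
  rcases lt_trichotomy (k + 1) (T + 1) with hlt | heq | hgt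
  · rw [if_pos (by omega), if_pos (by omega), if_pos (by omega), hrec k hk (by omega)]
  · obtain rfl : k = T := by omega
    rw [if_neg (by omega), if_pos le_rfl, if_pos le_rfl, hterm]
  · rw [if_neg (by omega), if_neg (by omega), if_neg (by omega), Matrix.mul_zero, Matrix.mul_zero,
      add_zero]

theorem firResponse_zero (h : SLSFeasible A B T R M) (hT : 1 ≤ T) (v : ℕ → Fin n → ℝ) :
    firResponse R T v 0 = v 0 := by
  rw [firResponse_eq_sum_range, sum_range_one, h.truncateTaps_one hT, one_mulVec]

theorem firResponse_succ (h : SLSFeasible A B T R M) (hT : 1 ≤ T) (v : ℕ → Fin n → ℝ) (t : ℕ) :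
    firResponse R T v (t + 1) =
      A.mulVec (firResponse R T v t) + B.mulVec (firResponse M T v t) + v (t + 1) := by
  simp only [firResponse_eq_sum_range, sum_range_succ' _ (t + 1), h.truncateTaps_one hT,
    one_mulVec, Nat.sub_zero, mulVec_sum, ← sum_add_distrib]
  congr 1
  refine sum_congr rfl fun k _ => ?_
  rw [h.truncateTaps_succ (Nat.le_add_left 1 k), add_mulVec, mulVec_mulVec, mulVec_mulVec,
    Nat.add_sub_add_right]

end SLSFeasible

theorem blended_clm_valid_general (n m T N : ℕ) (hT : 1 ≤ T)
    (A : Matrix (Fin n) (Fin n) ℝ) (B : Matrix (Fin n) (Fin m) ℝ)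
    (η : ℕ → ℝ) (hη0 : η 0 = 0)
    (R : ℕ → ℕ → Matrix (Fin n) (Fin n) ℝ) (M : ℕ → ℕ → Matrix (Fin m) (Fin n) ℝ)
    (hSLS : ∀ i ∈ Finset.Icc 1 N, SLSFeasible A B T (R i) (M i))
    (w : ℕ → Fin n → ℝ) (hw : ∀ t : ℕ, ‖w t‖ ≤ η N) :
    blend R η N T w 0 = w 0 ∧
    ∀ t : ℕ, 1 ≤ t →
      blend R η N T w t =
        A.mulVec (blend R η N T w (t - 1)) + B.mulVec (blend M η N T w (t - 1)) + w t := by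
  constructor
  · rw [blend_eq_sum_firResponse, sum_congr rfl fun i hi => (hSLS i hi).firResponse_zero hT _]
    exact sum_satProj_sub_satProj hη0 (hw 0)
  · rintro t ht
    obtain ⟨s, rfl⟩ : ∃ s, t = s + 1 := ⟨t - 1, by omega⟩
    rw [Nat.add_sub_cancel, blend_eq_sum_firResponse,
      sum_congr rfl fun i hi => (hSLS i hi).firResponse_succ hT _ s, sum_add_distrib,
      sum_add_distrib, sum_satProj_sub_satProj hη0 (hw (s + 1)), blend_eq_sum_firResponse,
      blend_eq_sum_firResponse, mulVec_sum, mulVec_sum]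

/-- Blended closed loop maps are valid CLMs for bounded
disturbances. If each `(R^i, M^i)` satisfies the SLS feasibility conditions for
`(A, B)` with horizon `T`, and `0 = η_0 ≤ η_1 ≤ … ≤ η_N`, then for every
disturbance `w` with `sup_t ‖w_t‖ ≤ η_N` (sup vector norm) the blended maps
satisfy the linear CLM equations. -/
theorem blended_clm_valid (n m T N : ℕ) (hT : 1 ≤ T) (hN : 1 ≤ N)
    (A : Matrix (Fin n) (Fin n) ℝ) (B : Matrix (Fin n) (Fin m) ℝ)
    (η : ℕ → ℝ) (hη0 : η 0 = 0) (hmono : ∀ i : ℕ, i < N → η i ≤ η (i + 1))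
    (R : ℕ → ℕ → Matrix (Fin n) (Fin n) ℝ) (M : ℕ → ℕ → Matrix (Fin m) (Fin n) ℝ)
    (hSLS : ∀ i ∈ Finset.Icc 1 N, SLSFeasible A B T (R i) (M i))
    (w : ℕ → Fin n → ℝ) (hw : ∀ t : ℕ, ‖w t‖ ≤ η N) :
    blend R η N T w 0 = w 0 ∧
    ∀ t : ℕ, 1 ≤ t →
      blend R η N T w t =
        A.mulVec (blend R η N T w (t - 1)) + B.mulVec (blend M η N T w (t - 1)) + w t :=
  blended_clm_valid_general n m T N hT A B η hη0 R M hSLS w hw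
end

section
/- Uniform output bound for blended FIR maps (safety sufficiency and no-windup): Let N ≥ 1, levels 0 = η_0 ≤ η_1 ≤ … ≤ η_N, T ≥ 1, and matrices M^i_1, …, M^i_T ∈ ℝ^{m×n} for i = 1, …, N. Let P_η be the saturation projection. Then for EVERY sequence w : ℕ → ℝⁿ (no bound on w required) and every t, |Σ_{i=1}^N Σ_{k=1}^{min(t+1,T)} M^i_k (P_{η_i}(w_{t+1−k}) − P_{η_{i−1}}(w_{t+1−k}))| ≤ Σ_{i=1}^N (η_i − η_{i−1}) ‖[M^i_T M^i_{T−1} ⋯ M^i_1]‖, where |·| is the sup vector norm on ℝᵐ and ‖·‖ is the induced ℓ∞→ℓ∞ norm (maximum absolute row sum) of the row-wise concatenated matrix. In particular, if Σ_{i=1}^N (η_i − η_{i−1}) ‖[M^i_T ⋯ M^i_1]‖ ≤ u_max, then the blended controller output never exceeds u_max in sup norm for any internal signal. -/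
/-- Induced ℓ∞→ℓ∞ norm (maximum absolute row sum) of the row-wise
concatenation `[M_T M_{T-1} ⋯ M_1]`. -/
noncomputable def concatNorm {p n : ℕ} (T : ℕ) (M : ℕ → Matrix (Fin p) (Fin n) ℝ) : ℝ :=
  ⨆ r : Fin p, ∑ k ∈ Finset.Icc 1 T, ∑ j : Fin n, |M k r j|

/-
Saturating at two levels `η'` and `η` changes each coordinate by at most `|η - η'|`, since
`min |a| ·` is 1-Lipschitz and `|sign a| ≤ 1`; this holds for every input, however large.
Each FIR layer therefore acts on a signal of sup norm at most `η_i - η_{i-1}`, and a truncated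
FIR sum of such signals is bounded row by row by the absolute row sums of `[M_T ⋯ M_1]`.
-/

open Finset Matrix

lemma abs_satScalar_sub_satScalar_le (η η' a : ℝ) :
    |satScalar η a - satScalar η' a| ≤ |η - η'| := by
  have hsign : |Real.sign a| ≤ 1 := by
    rcases Real.sign_apply_eq a with h | h | h <;> simp [h]
  calc |satScalar η a - satScalar η' a|
      = |Real.sign a| * |min |a| η - min |a| η'| := by
        rw [satScalar, satScalar, ← mul_sub, abs_mul]
    _ ≤ 1 * |η - η'| :=
        mul_le_mul hsign (by simpa using abs_min_sub_min_le_max |a| η |a| η') (abs_nonneg _)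
          zero_le_one
    _ = |η - η'| := one_mul _

lemma norm_satProj_sub_satProj_le {n : ℕ} (η η' : ℝ) (w : Fin n → ℝ) :
    ‖satProj η w - satProj η' w‖ ≤ |η - η'| :=
  (pi_norm_le_iff_of_nonneg (abs_nonneg _)).2 fun j =>
    abs_satScalar_sub_satScalar_le η η' (w j)

lemma abs_mulVec_apply_le {ι κ : Type*} [Fintype κ] (A : Matrix ι κ ℝ) (v : κ → ℝ) (r : ι) :
    |(A *ᵥ v) r| ≤ (∑ j, |A r j|) * ‖v‖ := by
  rw [mulVec, dotProduct, sum_mul]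
  refine (abs_sum_le_sum_abs _ _).trans (sum_le_sum fun j _ => ?_)
  rw [abs_mul]
  exact mul_le_mul_of_nonneg_left (norm_le_pi_norm v j) (abs_nonneg _)

section concatNorm

variable {p n : ℕ} (T : ℕ) (M : ℕ → Matrix (Fin p) (Fin n) ℝ)

lemma concatNorm_nonneg : 0 ≤ concatNorm T M :=
  Real.iSup_nonneg fun _ => sum_nonneg fun _ _ => sum_nonneg fun _ _ => abs_nonneg _

lemma sum_rowSum_le_concatNorm (r : Fin p) :
    ∑ k ∈ Icc 1 T, ∑ j, |M k r j| ≤ concatNorm T M :=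
  le_ciSup (Set.finite_range fun r : Fin p => ∑ k ∈ Icc 1 T, ∑ j, |M k r j|).bddAbove r

lemma norm_sum_mulVec_le_mul_concatNorm {s : Finset ℕ} (hs : s ⊆ Icc 1 T)
    (v : ℕ → Fin n → ℝ) {d : ℝ} (hd : 0 ≤ d) (hv : ∀ k ∈ s, ‖v k‖ ≤ d) :
    ‖∑ k ∈ s, M k *ᵥ v k‖ ≤ d * concatNorm T M := by
  refine (pi_norm_le_iff_of_nonneg (mul_nonneg hd (concatNorm_nonneg T M))).2 fun r => ?_
  calc ‖(∑ k ∈ s, M k *ᵥ v k) r‖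
      ≤ ∑ k ∈ s, |(M k *ᵥ v k) r| := by
        rw [Finset.sum_apply]
        exact abs_sum_le_sum_abs _ _
    _ ≤ ∑ k ∈ s, d * ∑ j, |M k r j| := sum_le_sum fun k hk =>
        (abs_mulVec_apply_le (M k) (v k) r).trans <| by
          rw [mul_comm]
          exact mul_le_mul_of_nonneg_right (hv k hk) (sum_nonneg fun _ _ => abs_nonneg _)
    _ ≤ d * ∑ k ∈ Icc 1 T, ∑ j, |M k r j| := by
        rw [← mul_sum]
        exact mul_le_mul_of_nonneg_left
          (sum_le_sum_of_subset_of_nonneg hs fun _ _ _ => sum_nonneg fun _ _ => abs_nonneg _) hd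
    _ ≤ d * concatNorm T M := mul_le_mul_of_nonneg_left (sum_rowSum_le_concatNorm T M r) hd

end concatNorm

theorem blended_output_uniform_bound_general (n m T N : ℕ)
    (η : ℕ → ℝ) (hmono : ∀ i : ℕ, i < N → η i ≤ η (i + 1))
    (M : ℕ → ℕ → Matrix (Fin m) (Fin n) ℝ) (umax : ℝ) :
    (∀ (w : ℕ → Fin n → ℝ) (t : ℕ),
      ‖∑ i ∈ Finset.Icc 1 N, ∑ k ∈ Finset.Icc 1 (min (t + 1) T),
          (M i k).mulVec
            (satProj (η i) (w (t + 1 - k)) - satProj (η (i - 1)) (w (t + 1 - k)))‖ ≤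
        ∑ i ∈ Finset.Icc 1 N, (η i - η (i - 1)) * concatNorm T (M i)) ∧
    ((∑ i ∈ Finset.Icc 1 N, (η i - η (i - 1)) * concatNorm T (M i)) ≤ umax →
      ∀ (w : ℕ → Fin n → ℝ) (t : ℕ),
        ‖∑ i ∈ Finset.Icc 1 N, ∑ k ∈ Finset.Icc 1 (min (t + 1) T),
            (M i k).mulVec
              (satProj (η i) (w (t + 1 - k)) - satProj (η (i - 1)) (w (t + 1 - k)))‖ ≤
          umax) := by
  have bound : ∀ (w : ℕ → Fin n → ℝ) (t : ℕ),
      ‖∑ i ∈ Icc 1 N, ∑ k ∈ Icc 1 (min (t + 1) T),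
          (M i k) *ᵥ (satProj (η i) (w (t + 1 - k)) - satProj (η (i - 1)) (w (t + 1 - k)))‖ ≤
        ∑ i ∈ Icc 1 N, (η i - η (i - 1)) * concatNorm T (M i) := by
    intro w t
    refine (norm_sum_le _ _).trans (sum_le_sum fun i hi => ?_)
    obtain ⟨hi1, hiN⟩ := mem_Icc.1 hi
    have hstep : 0 ≤ η i - η (i - 1) := by
      have := hmono (i - 1) (by omega)
      rw [Nat.sub_add_cancel hi1] at this
      linarith
    refine norm_sum_mulVec_le_mul_concatNorm T (M i)
      (Icc_subset_Icc le_rfl (min_le_right _ _)) _ hstep fun k _ => ?_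
    simpa only [abs_of_nonneg hstep] using
      norm_satProj_sub_satProj_le (η i) (η (i - 1)) (w (t + 1 - k))
  exact ⟨bound, fun h w t => (bound w t).trans h⟩

/-- Uniform output bound for blended FIR maps (safety
sufficiency and no-windup). For EVERY sequence `w` (no bound required) and
every `t`, the blended output is bounded in sup norm by
`Σ_{i=1}^N (η_i − η_{i-1}) ‖[M^i_T ⋯ M^i_1]‖`; in particular, if this
quantity is at most `u_max`, the blended controller output never exceeds
`u_max`. -/
theorem blended_output_uniform_bound (n m T N : ℕ) (hT : 1 ≤ T) (hN : 1 ≤ N)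
    (η : ℕ → ℝ) (hη0 : η 0 = 0) (hmono : ∀ i : ℕ, i < N → η i ≤ η (i + 1))
    (M : ℕ → ℕ → Matrix (Fin m) (Fin n) ℝ) (umax : ℝ) :
    (∀ (w : ℕ → Fin n → ℝ) (t : ℕ),
      ‖∑ i ∈ Finset.Icc 1 N, ∑ k ∈ Finset.Icc 1 (min (t + 1) T),
          (M i k).mulVec
            (satProj (η i) (w (t + 1 - k)) - satProj (η (i - 1)) (w (t + 1 - k)))‖ ≤
        ∑ i ∈ Finset.Icc 1 N, (η i - η (i - 1)) * concatNorm T (M i)) ∧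
    ((∑ i ∈ Finset.Icc 1 N, (η i - η (i - 1)) * concatNorm T (M i)) ≤ umax →
      ∀ (w : ℕ → Fin n → ℝ) (t : ℕ),
        ‖∑ i ∈ Finset.Icc 1 N, ∑ k ∈ Finset.Icc 1 (min (t + 1) T),
            (M i k).mulVec
              (satProj (η i) (w (t + 1 - k)) - satProj (η (i - 1)) (w (t + 1 - k)))‖ ≤
          umax) :=
  blended_output_uniform_bound_general n m T N η hmono M umax
end

section
/- Lemma VI.1 (ℓ∞ bound for the saturated internal dynamics): Let A ∈ ℝ^{n×n}, τ ∈ ℕ, and suppose ‖A^{τ+1}‖ < 1 where ‖·‖ is the induced ℓ∞→ℓ∞ matrix norm. Let η ≥ 0 and let P_η be the saturation projection on ℝⁿ. Suppose the sequences ŵ, w : ℕ → ℝⁿ satisfy ŵ_t = w_t for 0 ≤ t < τ and ŵ_t = A^{τ+1}(ŵ_{t−τ} − P_η(ŵ_{t−τ})) + w_t for t ≥ τ. Then for every w with sup_t |w_t| < ∞ one has sup_t |ŵ_t| ≤ (1/(1 − ‖A^{τ+1}‖))·sup_t |w_t|, where |·| is the sup vector norm on ℝⁿ. -/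
/-- Induced ℓ∞→ℓ∞ matrix norm (maximum absolute row sum). -/
noncomputable def linftyNorm {n m : ℕ} (A : Matrix (Fin n) (Fin m) ℝ) : ℝ :=
  ⨆ i : Fin n, ∑ j : Fin m, |A i j|

/-!
Saturation never increases the size of a coordinate, `|a - sat(a, η)| ≤ |a|`, so with
`c = ‖A^{τ+1}‖` and `W = sup_t |w_t|` the recursion gives `|ŵ_t| ≤ c |ŵ_{t-τ}| + W`,
while `|ŵ_t| ≤ W` for `t < τ`. Since `W / (1 - c)` is the fixed point of `x ↦ c x + W`
and `c < 1`, strong induction on `t` keeps `|ŵ_t|` below it.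
-/

open Matrix

section LinftyOpNorm

attribute [local instance] Matrix.linftyOpNormedAddCommGroup

theorem linftyNorm_eq_linfty_opNorm {n m : ℕ} (A : Matrix (Fin n) (Fin m) ℝ) :
    linftyNorm A = ‖A‖ := by
  rw [Matrix.linfty_opNorm_def, Finset.sup_univ_eq_ciSup, NNReal.coe_iSup, linftyNorm]
  simp

theorem linftyNorm_nonneg {n m : ℕ} (A : Matrix (Fin n) (Fin m) ℝ) : 0 ≤ linftyNorm A :=
  linftyNorm_eq_linfty_opNorm A ▸ norm_nonneg A

theorem norm_mulVec_le_linftyNorm_mul {n m : ℕ} (A : Matrix (Fin n) (Fin m) ℝ)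
    (v : Fin m → ℝ) : ‖A *ᵥ v‖ ≤ linftyNorm A * ‖v‖ :=
  linftyNorm_eq_linfty_opNorm A ▸ Matrix.linfty_opNorm_mulVec A v

end LinftyOpNorm

theorem abs_sub_satScalar {η : ℝ} (hη : 0 ≤ η) (a : ℝ) :
    |a - satScalar η a| = |a| - min |a| η := by
  rcases lt_trichotomy a 0 with h | rfl | h
  · rw [satScalar, Real.sign_of_neg h, abs_of_neg h,
      abs_of_nonpos (by linarith [min_le_left (-a) η])]
    ring
  · simp [satScalar, hη]
  · rw [satScalar, Real.sign_of_pos h, abs_of_pos h,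
      abs_of_nonneg (by linarith [min_le_left a η])]
    ring

theorem abs_sub_satScalar_le {η : ℝ} (hη : 0 ≤ η) (a : ℝ) : |a - satScalar η a| ≤ |a| := by
  rw [abs_sub_satScalar hη]
  exact sub_le_self _ (le_min (abs_nonneg a) hη)

theorem norm_sub_satProj_le {n : ℕ} {η : ℝ} (hη : 0 ≤ η) (v : Fin n → ℝ) :
    ‖v - satProj η v‖ ≤ ‖v‖ :=
  pi_norm_le_iff_of_nonneg (norm_nonneg v) |>.2 fun i =>
    (abs_sub_satScalar_le hη (v i)).trans (norm_le_pi_norm v i)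

theorem le_div_one_sub_of_le_mul_delay_add {x : ℕ → ℝ} {c W : ℝ} {τ : ℕ}
    (hc₀ : 0 ≤ c) (hc₁ : c < 1) (hW : 0 ≤ W) (hinit : ∀ t < τ, x t ≤ W)
    (hstep : ∀ t, τ ≤ t → x t ≤ c * x (t - τ) + W) (t : ℕ) : x t ≤ W / (1 - c) := by
  have hpos : 0 < 1 - c := sub_pos.2 hc₁
  induction t using Nat.strong_induction_on with
  | _ t ih =>
    rcases lt_or_ge t τ with ht | ht
    · exact (hinit t ht).trans (le_div_self hW hpos (by linarith))
    obtain rfl | hτ := Nat.eq_zero_or_pos τ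
    · have h := hstep t ht
      rw [Nat.sub_zero] at h
      rw [le_div_iff₀ hpos]
      linarith
    · calc x t ≤ c * x (t - τ) + W := hstep t ht
        _ ≤ c * (W / (1 - c)) + W := by gcongr; exact ih (t - τ) (by omega)
        _ = W / (1 - c) := by field_simp; ring

/-- Lemma VI.1 — ℓ∞ bound for the saturated internal dynamics.
If `‖A^{τ+1}‖ < 1` (induced ℓ∞→ℓ∞ norm) and the sequences `ŵ, w` satisfy
`ŵ_t = w_t` for `t < τ` and
`ŵ_t = A^{τ+1}(ŵ_{t−τ} − P_η(ŵ_{t−τ})) + w_t` for `t ≥ τ`, then for every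
bounded `w`, `sup_t ‖ŵ_t‖ ≤ (1/(1 − ‖A^{τ+1}‖))·sup_t ‖w_t‖`. -/
theorem saturated_internal_dynamics_bound (n : ℕ)
    (A : Matrix (Fin n) (Fin n) ℝ) (τ : ℕ)
    (hA : linftyNorm (A ^ (τ + 1)) < 1)
    (η : ℝ) (hη : 0 ≤ η)
    (wHat w : ℕ → Fin n → ℝ)
    (hsmall : ∀ t : ℕ, t < τ → wHat t = w t)
    (hrec : ∀ t : ℕ, τ ≤ t →
      wHat t = (A ^ (τ + 1)).mulVec (wHat (t - τ) - satProj η (wHat (t - τ))) + w t)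
    (hbdd : BddAbove (Set.range fun t => ‖w t‖)) :
    ∀ t : ℕ, ‖wHat t‖ ≤ (1 / (1 - linftyNorm (A ^ (τ + 1)))) * ⨆ s : ℕ, ‖w s‖ := by
  set c := linftyNorm (A ^ (τ + 1))
  set W := ⨆ s : ℕ, ‖w s‖
  have hw : ∀ t, ‖w t‖ ≤ W := le_ciSup hbdd
  have hstep : ∀ t, τ ≤ t → ‖wHat t‖ ≤ c * ‖wHat (t - τ)‖ + W := fun t ht =>
    calc ‖wHat t‖
        ≤ ‖(A ^ (τ + 1)) *ᵥ (wHat (t - τ) - satProj η (wHat (t - τ)))‖ + ‖w t‖ :=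
          hrec t ht ▸ norm_add_le _ _
      _ ≤ c * ‖wHat (t - τ) - satProj η (wHat (t - τ))‖ + W :=
          add_le_add (norm_mulVec_le_linftyNorm_mul _ _) (hw t)
      _ ≤ c * ‖wHat (t - τ)‖ + W := by
          gcongr
          · exact linftyNorm_nonneg _
          · exact norm_sub_satProj_le hη _
  intro t
  rw [one_div_mul_eq_div]
  exact le_div_one_sub_of_le_mul_delay_add (linftyNorm_nonneg _) hA
    ((norm_nonneg _).trans (hw 0)) (fun t ht => hsmall t ht ▸ hw t) hstep t
end

section
/- Small-gain theorem for strictly causal operators (Theorem A.1): Let Δ be a strictly causal operator on ℝⁿ-valued sequences, i.e., a family of functions Δ_t : (ℝⁿ)^t → ℝⁿ acting by Δ(x)_0 = 0 and Δ(x)_t = Δ_t(x_{t−1}, …, x_0). Then: (a) for every sequence w : ℕ → ℝⁿ there exists a unique sequence ŵ with ŵ_t = Δ(ŵ)_t + w_t for all t; and (b) if p ∈ [1, ∞] and there exist 0 ≤ γ < 1 and β ≥ 0 such that ‖Δ(x)‖_p ≤ γ‖x‖_p + β for every sequence x with ‖x‖_p < ∞, then for every w with ‖w‖_p < ∞ the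 unique solution ŵ satisfies ‖ŵ‖_p ≤ (‖w‖_p + β)/(1 − γ). Here ‖x‖_p = (Σ_t |x_t|^p)^{1/p} for p < ∞ and ‖x‖_∞ = sup_t |x_t|, with |·| the sup vector norm on ℝⁿ. -/
open scoped ENNReal NNReal

/-- The ℓ_p norm (valued in `ℝ≥0∞`) of a sequence of vectors in `ℝⁿ`
(each vector carrying the sup norm):
`‖x‖_p = (Σ_t |x_t|^p)^{1/p}` for `p < ∞` and `‖x‖_∞ = sup_t |x_t|`. -/
noncomputable def lpSeqNorm (n : ℕ) (p : ℝ≥0∞) (x : ℕ → Fin n → ℝ) : ℝ≥0∞ :=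
  if p = ∞ then ⨆ t : ℕ, (‖x t‖₊ : ℝ≥0∞)
  else (∑' t : ℕ, (‖x t‖₊ : ℝ≥0∞) ^ p.toReal) ^ (1 / p.toReal)

/-!
Part (a) is strong recursion: `ŵ_t` only involves `ŵ_0, …, ŵ_{t-1}`.

For (b), `‖·‖_p` is the `eLpNorm` for counting measure on `ℕ`. The gain bound only applies to
sequences of finite norm, so it is applied to the truncations `x_T = 1_{[0,T)} ŵ`, which have
finite norm. By causality `|x_T| ≤ |Δ(x_T) + w|` pointwise, hence
`‖x_T‖ ≤ γ ‖x_T‖ + β + ‖w‖`, i.e. `‖x_T‖ ≤ (‖w‖ + β) / (1 - γ)` uniformly in `T`;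
Fatou's lemma passes to `T → ∞`.
-/

open MeasureTheory Filter Set

theorem existsUnique_strongRec {α : Type*} (F : (t : ℕ) → (Fin t → α) → α) :
    ∃! x : ℕ → α, ∀ t, x t = F t fun j : Fin t => x j := by
  refine ⟨Nat.strongRec fun t x => F t fun j => x j j.isLt, fun t => Nat.strongRec_eq _ t, ?_⟩
  intro y hy
  funext t
  induction t using Nat.strong_induction_on with
  | _ t ih => rw [hy t, Nat.strongRec_eq]; congr with j; exact ih j j.isLt

theorem ENNReal.le_div_one_sub_of_le_mul_add {a γ c : ℝ≥0∞} (hγ : γ < 1) (ha : a ≠ ∞)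
    (h : a ≤ γ * a + c) : a ≤ c / (1 - γ) := by
  rw [ENNReal.le_div_iff_mul_le (Or.inl (tsub_pos_of_lt hγ).ne')
    (Or.inl (tsub_le_self.trans_lt one_lt_top).ne), ENNReal.mul_sub fun _ _ => ha, mul_one,
    tsub_le_iff_right, mul_comm, add_comm]
  exact h

theorem lpSeqNorm_eq_eLpNorm {n : ℕ} {p : ℝ≥0∞} (hp : p ≠ 0) (x : ℕ → Fin n → ℝ) :
    lpSeqNorm n p x = eLpNorm x p Measure.count := by
  unfold lpSeqNorm
  split_ifs with htop
  · simp only [htop, eLpNorm_exponent_top, eLpNormEssSup_count]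
    rfl
  · rw [eLpNorm_eq_lintegral_rpow_enorm_toReal hp htop, lintegral_count]
    rfl

section StrictlyCausal

variable {E : Type*}

def causalApply (Δ : (t : ℕ) → (Fin t → E) → E) (x : ℕ → E) : ℕ → E :=
  fun t => Δ t fun j => x j

theorem causalApply_indicator_Iio [Zero E] (Δ : (t : ℕ) → (Fin t → E) → E) (x : ℕ → E)
    {T t : ℕ} (ht : t < T) : causalApply Δ ((Iio T).indicator x) t = causalApply Δ x t := by
  unfold causalApply
  congr with j
  exact Set.indicator_of_mem (mem_Iio.2 (j.isLt.trans ht)) x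

variable [NormedAddCommGroup E]

theorem eLpNorm_indicator_Iio_lt_top (x : ℕ → E) (T : ℕ) (p : ℝ≥0∞) :
    eLpNorm ((Iio T).indicator x) p Measure.count < ∞ := by
  rw [eLpNorm_indicator_eq_eLpNorm_restrict measurableSet_Iio]
  have : IsFiniteMeasure (Measure.count.restrict (Iio T)) :=
    isFiniteMeasure_restrict.2 (Measure.count_apply_lt_top.2 (finite_Iio T)).ne
  refine (MemLp.of_bound .of_discrete (∑ t ∈ Finset.range T, ‖x t‖)
    (ae_restrict_of_forall_mem measurableSet_Iio fun t ht => ?_)).eLpNorm_lt_top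
  exact Finset.single_le_sum (f := fun t => ‖x t‖) (fun _ _ => norm_nonneg _)
    (Finset.mem_range.2 ht)

theorem eLpNorm_le_of_forall_indicator_Iio_le {x : ℕ → E} {p B : ℝ≥0∞}
    (h : ∀ T, eLpNorm ((Iio T).indicator x) p Measure.count ≤ B) :
    eLpNorm x p Measure.count ≤ B := by
  refine (Lp.eLpNorm_lim_le_liminf_eLpNorm (fun _ => .of_discrete) x
    (ae_of_all _ fun t => ?_)).trans (liminf_le_of_frequently_le' (Frequently.of_forall h))
  exact tendsto_const_nhds.congr' ((eventually_gt_atTop t).mono fun T ht =>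
    (Set.indicator_of_mem (mem_Iio.2 ht) x).symm)

theorem eLpNorm_le_of_small_gain {Δ : (t : ℕ) → (Fin t → E) → E} {p γ β : ℝ≥0∞} (hp : 1 ≤ p)
    (hγ : γ < 1) (hΔ : ∀ x : ℕ → E, eLpNorm x p Measure.count < ∞ →
      eLpNorm (causalApply Δ x) p Measure.count ≤ γ * eLpNorm x p Measure.count + β)
    {w x : ℕ → E} (hx : ∀ t, x t = causalApply Δ x t + w t) :
    eLpNorm x p Measure.count ≤ (eLpNorm w p Measure.count + β) / (1 - γ) := by
  refine eLpNorm_le_of_forall_indicator_Iio_le fun T => ?_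
  set xT := (Iio T).indicator x
  have hxT : ∀ t, ‖xT t‖ₑ ≤ ‖(causalApply Δ xT + w) t‖ₑ := by
    intro t
    by_cases ht : t < T
    · rw [Pi.add_apply, causalApply_indicator_Iio Δ x ht, ← hx t]
      exact (congrArg _ (Set.indicator_of_mem (mem_Iio.2 ht) x)).le
    · simp [xT, indicator_of_notMem (notMem_Iio.2 (not_lt.1 ht))]
  refine ENNReal.le_div_one_sub_of_le_mul_add hγ (eLpNorm_indicator_Iio_lt_top x T p).ne ?_
  calc eLpNorm xT p Measure.count
      ≤ eLpNorm (causalApply Δ xT + w) p Measure.count := eLpNorm_mono_enorm hxT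
    _ ≤ eLpNorm (causalApply Δ xT) p Measure.count + eLpNorm w p Measure.count :=
        eLpNorm_add_le .of_discrete .of_discrete hp
    _ ≤ γ * eLpNorm xT p Measure.count + β + eLpNorm w p Measure.count := by
        gcongr
        exact hΔ xT (eLpNorm_indicator_Iio_lt_top x T p)
    _ = γ * eLpNorm xT p Measure.count + (eLpNorm w p Measure.count + β) := by ring

end StrictlyCausal

/-- Small-gain theorem for strictly causal operators
(Theorem A.1). A strictly causal operator `Δ` is given by component functions
`Δ_t : (ℝⁿ)^t → ℝⁿ` acting by `Δ(x)_t = Δ_t(x_{t−1}, …, x_0)`.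
(a) For every `w` there is a unique `ŵ` with `ŵ_t = Δ(ŵ)_t + w_t` for all `t`.
(b) If `1 ≤ p` and `‖Δ(x)‖_p ≤ γ‖x‖_p + β` for all `x` with `‖x‖_p < ∞`,
where `0 ≤ γ < 1`, `0 ≤ β`, then the unique solution satisfies
`‖ŵ‖_p ≤ (‖w‖_p + β)/(1 − γ)` whenever `‖w‖_p < ∞`. -/
theorem small_gain_strictly_causal (n : ℕ)
    (Δ : (t : ℕ) → (Fin t → (Fin n → ℝ)) → (Fin n → ℝ)) :
    (∀ w : ℕ → Fin n → ℝ, ∃! wHat : ℕ → Fin n → ℝ,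
      ∀ t : ℕ, wHat t = Δ t (fun j : Fin t => wHat j) + w t) ∧
    (∀ p : ℝ≥0∞, 1 ≤ p → ∀ γ β : ℝ≥0, γ < 1 →
      (∀ x : ℕ → Fin n → ℝ, lpSeqNorm n p x < ⊤ →
        lpSeqNorm n p (fun t => Δ t (fun j : Fin t => x j)) ≤
          (γ : ℝ≥0∞) * lpSeqNorm n p x + (β : ℝ≥0∞)) →
      ∀ w wHat : ℕ → Fin n → ℝ, lpSeqNorm n p w < ⊤ →
        (∀ t : ℕ, wHat t = Δ t (fun j : Fin t => wHat j) + w t) →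
        lpSeqNorm n p wHat ≤ (lpSeqNorm n p w + (β : ℝ≥0∞)) / (1 - (γ : ℝ≥0∞))) := by
  refine ⟨fun w => existsUnique_strongRec fun t y => Δ t y + w t, ?_⟩
  intro p hp γ β hγ hΔ w wHat _ hwHat
  simp only [lpSeqNorm_eq_eLpNorm (zero_lt_one.trans_le hp).ne'] at hΔ ⊢
  exact eLpNorm_le_of_small_gain hp (ENNReal.coe_lt_one_iff.2 hγ) hΔ hwHat
end
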